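/- arXiv:2504.21114 — 3 statements merged into one kernel-verified Lean document; each statement's English description precedes it below -/
import Mathlib

section
/- At the predator-free equilibrium E₁ = (γ, 0), the Jacobian is upper triangular with eigenvalues −1 and ((δ−m)γ + (δξ − m(1+αξ))(ωγ²+1))/((ωγ²+1)(1+αξ)+γ). Hence E₁ is a locally asymptotically stable node (both eigenvalues negative) if and only if δξ − m(1+αξ) < −(δ−m)γ/(ωγ²+1), and a saddle if the reverse strict inequality holds. -/
open Module.End

lemma aux_eig (a b d : ℝ) :
    Module.End.HasEigenvalue (Matrix.toLin' !![a, b; 0, d]) a ∧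
    Module.End.HasEigenvalue (Matrix.toLin' !![a, b; 0, d]) d := by
  constructor
  · apply Module.End.hasEigenvalue_of_hasEigenvector (x := ![1, 0])
    constructor
    · rw [Module.End.mem_eigenspace_iff]
      simp [Matrix.toLin'_apply, Matrix.mulVec, dotProduct, Fin.sum_univ_two]
      funext i
      fin_cases i <;> simp
    · intro h
      have := congrFun h 0
      simp at this
  · by_cases hda : d = a
    · subst hda
      apply Module.End.hasEigenvalue_of_hasEigenvector (x := ![1, 0])
      constructor
      · rw [Module.End.mem_eigenspace_iff]
        funext i
        fin_cases i <;>
          simp [Matrix.toLin'_apply, Matrix.mulVec, dotProduct, Fin.sum_univ_two]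
      · intro h
        have := congrFun h 0
        simp at this
    · apply Module.End.hasEigenvalue_of_hasEigenvector (x := ![b / (d - a), 1])
      constructor
      · rw [Module.End.mem_eigenspace_iff]
        funext i
        have hda' : d - a ≠ 0 := sub_ne_zero.mpr hda
        fin_cases i <;>
          simp [Matrix.toLin'_apply, Matrix.mulVec, dotProduct, Fin.sum_univ_two]
        field_simp
        ring
      · intro h
        have := congrFun h 1
        simp at this

theorem stmt10 (γ ω α ξ ε δ m : ℝ) (hγ : 0 < γ) (hω : 0 < ω) (hα : 0 < α)
    (hξ : 0 < ξ) (hε : 0 < ε) (hm : 0 < m) (hδm : m < δ)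
    (J : Matrix (Fin 2) (Fin 2) ℝ)
    (hJ : J = !![-1, -γ / ((ω * γ ^ 2 + 1) * (1 + α * ξ) + γ);
                 0, ((δ - m) * γ + (δ * ξ - m * (1 + α * ξ)) * (ω * γ ^ 2 + 1)) /
                    ((ω * γ ^ 2 + 1) * (1 + α * ξ) + γ)]) :
    Module.End.HasEigenvalue (Matrix.toLin' J) (-1) ∧
    Module.End.HasEigenvalue (Matrix.toLin' J)
      (((δ - m) * γ + (δ * ξ - m * (1 + α * ξ)) * (ω * γ ^ 2 + 1)) /
        ((ω * γ ^ 2 + 1) * (1 + α * ξ) + γ)) ∧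
    ((((δ - m) * γ + (δ * ξ - m * (1 + α * ξ)) * (ω * γ ^ 2 + 1)) /
        ((ω * γ ^ 2 + 1) * (1 + α * ξ) + γ) < 0) ↔
      δ * ξ - m * (1 + α * ξ) < -(δ - m) * γ / (ω * γ ^ 2 + 1)) ∧
    ((0 < ((δ - m) * γ + (δ * ξ - m * (1 + α * ξ)) * (ω * γ ^ 2 + 1)) /
        ((ω * γ ^ 2 + 1) * (1 + α * ξ) + γ)) ↔
      -(δ - m) * γ / (ω * γ ^ 2 + 1) < δ * ξ - m * (1 + α * ξ)) := by
  subst hJ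
  have hw : (0:ℝ) < ω * γ ^ 2 + 1 := by positivity
  have hD : (0:ℝ) < (ω * γ ^ 2 + 1) * (1 + α * ξ) + γ := by positivity
  obtain ⟨h1, h2⟩ := aux_eig (-1) (-γ / ((ω * γ ^ 2 + 1) * (1 + α * ξ) + γ))
    (((δ - m) * γ + (δ * ξ - m * (1 + α * ξ)) * (ω * γ ^ 2 + 1)) /
      ((ω * γ ^ 2 + 1) * (1 + α * ξ) + γ))
  refine ⟨h1, h2, ?_, ?_⟩
  · rw [div_neg_iff, lt_div_iff₀ hw]
    constructor
    · rintro (⟨-, h⟩ | ⟨h, -⟩)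
      · linarith
      · linarith
    · intro h
      right
      exact ⟨by linarith, hD⟩
  · rw [lt_div_iff₀ hD, div_lt_iff₀ hw]
    constructor <;> intro h <;> nlinarith
end

section
/- Suppose δξ − m(1+αξ) > 0 with all parameters positive. At the prey-free equilibrium E₂ = (0, (δξ − m(1+αξ))/(mε)), the Jacobian is lower triangular with eigenvalues λ₁ = 1 − (δξ − m(1+αξ))/(δξε) and λ₂ = −(m/(δξ))(δξ − m(1+αξ)). Then λ₂ < 0 always; both eigenvalues are negative (stable node) if δξ − m(1+αξ) > δξε, and they have opposite signs (saddle) if 0 < δξ − m(1+αξ) < δξε. -/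
theorem stmt11 (γ ω α ξ ε δ m : ℝ) (hγ : 0 < γ) (hω : 0 < ω) (hα : 0 < α)
    (hξ : 0 < ξ) (hε : 0 < ε) (hm : 0 < m) (hδm : m < δ)
    (hpos : 0 < δ * ξ - m * (1 + α * ξ)) :
    (-(m / (δ * ξ)) * (δ * ξ - m * (1 + α * ξ)) < 0) ∧
    (δ * ξ * ε < δ * ξ - m * (1 + α * ξ) →
      1 - (δ * ξ - m * (1 + α * ξ)) / (δ * ξ * ε) < 0 ∧
      -(m / (δ * ξ)) * (δ * ξ - m * (1 + α * ξ)) < 0) ∧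
    (δ * ξ - m * (1 + α * ξ) < δ * ξ * ε →
      0 < 1 - (δ * ξ - m * (1 + α * ξ)) / (δ * ξ * ε) ∧
      -(m / (δ * ξ)) * (δ * ξ - m * (1 + α * ξ)) < 0) := by
  have hδ : 0 < δ := hm.trans hδm
  have hδξ : 0 < δ * ξ := mul_pos hδ hξ
  have hδξε : 0 < δ * ξ * ε := mul_pos hδξ hε
  have hlam2 : -(m / (δ * ξ)) * (δ * ξ - m * (1 + α * ξ)) < 0 := by
    have := mul_pos (div_pos hm hδξ) hpos
    nlinarith
  refine ⟨hlam2, fun h => ⟨?_, hlam2⟩, fun h => ⟨?_, hlam2⟩⟩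
  · have : 1 < (δ * ξ - m * (1 + α * ξ)) / (δ * ξ * ε) := (one_lt_div hδξε).mpr h
    linarith
  · have : (δ * ξ - m * (1 + α * ξ)) / (δ * ξ * ε) < 1 := (div_lt_one hδξε).mpr h
    linarith
end

section
/- If ωγ² ≤ 3, then for every x ∈ (0, γ) with x ≠ γ/3 (and every x when ωγ² < 3), we have (3ω/γ)x² − 2ωx + 1/γ > 0; hence, at any interior equilibrium (x*, y*) with x*, y* > 0, the determinant mεx*y*·((3ω/γ)x*² − 2ωx* + 1/γ)/((ωx*²+1)(1+αξ+εy*)+x*) is positive. -/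
theorem stmt13 (m ε ω γ α ξ : ℝ) (hm : 0 < m) (hε : 0 < ε) (hω : 0 < ω)
    (hγ : 0 < γ) (hα : 0 < α) (hξ : 0 < ξ) (hcase : ω * γ ^ 2 ≤ 3) :
    (∀ x ∈ Set.Ioo (0:ℝ) γ, x ≠ γ / 3 → 0 < 3 * ω / γ * x ^ 2 - 2 * ω * x + 1 / γ) ∧
    (ω * γ ^ 2 < 3 → ∀ x ∈ Set.Ioo (0:ℝ) γ, 0 < 3 * ω / γ * x ^ 2 - 2 * ω * x + 1 / γ) ∧
    (∀ xs ys : ℝ, 0 < xs → 0 < ys → xs ∈ Set.Ioo (0:ℝ) γ → xs ≠ γ / 3 →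
      0 < m * ε * xs * ys * (3 * ω / γ * xs ^ 2 - 2 * ω * xs + 1 / γ) /
        ((ω * xs ^ 2 + 1) * (1 + α * ξ + ε * ys) + xs)) := by
  have key : ∀ x : ℝ, x ≠ γ / 3 → 0 < 3 * ω / γ * x ^ 2 - 2 * ω * x + 1 / γ := by
    intro x hx
    have h1 : 0 < (x - γ / 3) ^ 2 := by
      have h0 : x - γ / 3 ≠ 0 := sub_ne_zero.mpr hx
      positivity
    rw [show 3 * ω / γ * x ^ 2 - 2 * ω * x + 1 / γ
        = (3 * ω * x ^ 2 - 2 * ω * γ * x + 1) / γ by field_simp]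
    apply div_pos _ hγ
    nlinarith [h1]
  refine ⟨fun x _ hx => key x hx, ?_, ?_⟩
  · intro hlt x _
    rw [show 3 * ω / γ * x ^ 2 - 2 * ω * x + 1 / γ
        = (3 * ω * x ^ 2 - 2 * ω * γ * x + 1) / γ by field_simp]
    apply div_pos _ hγ
    nlinarith [sq_nonneg (x - γ / 3)]
  · intro xs ys hxs hys _ hne
    have hq := key xs hne
    have hden : 0 < (ω * xs ^ 2 + 1) * (1 + α * ξ + ε * ys) + xs := by positivity
    have hnum : 0 < m * ε * xs * ys * (3 * ω / γ * xs ^ 2 - 2 * ω * xs + 1 / γ) := by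
      positivity
    exact div_pos hnum hden
end
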